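/- arXiv:2201.01866 — 4 statements merged into one kernel-verified Lean document; each statement's English description precedes it below -/
import Mathlib

section
/- If φ is a finite linear combination φ(x,t) = Σ_{n∈S} c_n (exp(nπi(1-v)(t+x)/L) − exp(nπi(1+v)(t-x)/L)) over a finite set S of nonzero integers with complex coefficients c_n, then for every t ≥ 0 the quantity (1/2)∫_{vt}^{L+vt} ((∂ₜφ + v∂ₓφ)² + (1-v²)(∂ₓφ)²) dx equals (2π²(1-v²)/L)·Σ_{n∈S} |n c_n|², where the integrand square means the squared modulus; in particular this energy is independent of t. -/
/-!
With `f := ∑ n ∈ S, c n * exp (n * (π / L) * y * I)`, a `2L`-periodic trigonometric polynomial,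
`φ x t = f ((1 - v) * (t + x)) - f ((1 + v) * (t - x))`. Writing `A`, `B` for the values of `f'` at
the two arguments, `∂ₜφ + v ∂ₓφ = (1 - v²)(A - B)` and `∂ₓφ = (1 - v) A + (1 + v) B`, so the energy
density is `2(1 - v²)((1 - v)‖A‖² + (1 + v)‖B‖²)`. Substituting `y = (1 - v)(t + x)` in the first
term and `y = (1 + v)(t - x)` in the second turns the integral over `[vt, L + vt]` into the
integral of `‖f'‖²` over two adjacent intervals of total length `2L`, a full period, and Parseval's
identity for `f'`, whose coefficients are `(π / L) I n c n`, finishes.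
-/

open MeasureTheory Complex Real

noncomputable def trigPoly (S : Finset ℤ) (a : ℤ → ℂ) (ω : ℝ) (y : ℝ) : ℂ :=
  ∑ n ∈ S, a n * exp (n * ω * y * I)

@[fun_prop]
theorem continuous_trigPoly (S : Finset ℤ) (a : ℤ → ℂ) (ω : ℝ) : Continuous (trigPoly S a ω) := by
  unfold trigPoly
  fun_prop

theorem hasDerivAt_trigPoly (S : Finset ℤ) (a : ℤ → ℂ) (ω y : ℝ) :
    HasDerivAt (trigPoly S a ω) (ω * I * trigPoly S (fun n => n * a n) ω y) y := by
  unfold trigPoly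
  rw [Finset.mul_sum]
  refine HasDerivAt.fun_sum fun n _ => ?_
  have h : HasDerivAt (fun y : ℝ => (n * ω * y * I : ℂ)) (n * ω * I) y := by
    simpa using ((hasDerivAt_id (y : ℂ)).const_mul ((n : ℂ) * ω)).mul_const I |>.comp_ofReal
  exact (h.cexp.const_mul (a n)).congr_deriv (by ring)

theorem integral_exp_int_mul_over_period (k : ℤ) {ω : ℝ} (hω : ω ≠ 0) (s : ℝ) :
    ∫ y in s..s + 2 * π / ω, exp (k * ω * y * I) = if k = 0 then ((2 * π / ω : ℝ) : ℂ) else 0 := by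
  split_ifs with hk
  · simp [hk]
  have hc : (k * ω * I : ℂ) ≠ 0 := by simp [hk, hω, I_ne_zero]
  have hperiod : exp (k * ω * I * ↑(s + 2 * π / ω)) = exp (k * ω * I * s) := by
    have hω' : (ω : ℂ) ≠ 0 := ofReal_ne_zero.mpr hω
    rw [show (k * ω * I * ↑(s + 2 * π / ω) : ℂ) = k * ω * I * s + k * (2 * π * I) by
      push_cast; field_simp]
    rw [Complex.exp_add, exp_int_mul_two_pi_mul_I, mul_one]
  simp_rw [show ∀ y : ℝ, (k * ω * y * I : ℂ) = k * ω * I * y from fun y => by ring]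
  rw [integral_exp_mul_complex hc, hperiod, sub_self, zero_div]

theorem integral_norm_sq_trigPoly (S : Finset ℤ) (a : ℤ → ℂ) {ω : ℝ} (hω : ω ≠ 0) (s : ℝ) :
    ∫ y in s..s + 2 * π / ω, ‖trigPoly S a ω y‖ ^ 2 = 2 * π / ω * ∑ n ∈ S, ‖a n‖ ^ 2 := by
  have hterm (n m : ℤ) (y : ℝ) :
      a n * exp (n * ω * y * I) * (starRingEnd ℂ) (a m * exp (m * ω * y * I))
        = a n * (starRingEnd ℂ) (a m) * exp ((n - m : ℤ) * ω * y * I) := by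
    simp only [map_mul, ← exp_conj, conj_ofReal, map_intCast, conj_I]
    rw [mul_mul_mul_comm, ← Complex.exp_add]
    push_cast
    ring_nf
  have hcont (n m : ℤ) :
      Continuous fun y : ℝ => a n * (starRingEnd ℂ) (a m) * exp ((n - m : ℤ) * ω * y * I) := by
    fun_prop
  apply ofReal_injective
  rw [← intervalIntegral.integral_ofReal]
  simp_rw [ofReal_pow, ← mul_conj', trigPoly, map_sum, Finset.sum_mul_sum, hterm]
  rw [intervalIntegral.integral_finsetSum fun n _ =>
    (continuous_finsetSum S fun m _ => hcont n m).intervalIntegrable _ _]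
  simp_rw [intervalIntegral.integral_finsetSum fun m _ => (hcont _ m).intervalIntegrable _ _,
    intervalIntegral.integral_const_mul, integral_exp_int_mul_over_period _ hω, sub_eq_zero,
    mul_ite, mul_zero, Finset.sum_ite_eq, mul_conj']
  push_cast
  rw [Finset.mul_sum]
  simp [mul_comm]

theorem norm_sq_energy_density (A B : ℂ) (v : ℝ) :
    ‖(1 - v) • A - (1 + v) • B + (v : ℂ) * ((1 - v) • A + (1 + v) • B)‖ ^ 2
        + (1 - v ^ 2) * ‖(1 - v) • A + (1 + v) • B‖ ^ 2
      = 2 * (1 - v ^ 2) * ((1 - v) * ‖A‖ ^ 2 + (1 + v) * ‖B‖ ^ 2) := by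
  simp only [Complex.sq_norm, normSq_apply, real_smul, add_re, sub_re, add_im, sub_im, mul_re,
    mul_im, ofReal_re, ofReal_im]
  ring

theorem integral_add_comp_characteristics {E : Type*} [NormedAddCommGroup E] [NormedSpace ℝ E]
    {g : ℝ → E} (hg : Continuous g) (v L t : ℝ) :
    ∫ x in v * t..L + v * t, ((1 - v) • g ((1 - v) * (t + x)) + (1 + v) • g ((1 + v) * (t - x)))
      = ∫ y in (1 - v ^ 2) * t - (1 + v) * L..(1 - v ^ 2) * t + (1 - v) * L, g y := by
  have hright : ∫ x in v * t..L + v * t, (1 - v) • g ((1 - v) * (t + x))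
      = ∫ y in (1 - v ^ 2) * t..(1 - v ^ 2) * t + (1 - v) * L, g y := by
    simp_rw [intervalIntegral.integral_smul, mul_add (1 - v) t, add_comm ((1 - v) * t),
      intervalIntegral.smul_integral_comp_mul_add]
    congr 1 <;> ring
  have hleft : ∫ x in v * t..L + v * t, (1 + v) • g ((1 + v) * (t - x))
      = ∫ y in (1 - v ^ 2) * t - (1 + v) * L..(1 - v ^ 2) * t, g y := by
    simp_rw [intervalIntegral.integral_smul, mul_sub (1 + v) t,
      intervalIntegral.smul_integral_comp_sub_mul]
    congr 1 <;> ring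
  have hint (c : ℝ) (h : ℝ → ℝ) (hh : Continuous h) :
      IntervalIntegrable (fun x => c • g (h x)) volume (v * t) (L + v * t) :=
    ((hg.comp hh).const_smul c).intervalIntegrable _ _
  rw [intervalIntegral.integral_add (hint _ _ (by fun_prop)) (hint _ _ (by fun_prop)), hright,
    hleft, add_comm, intervalIntegral.integral_add_adjacent_intervals (hg.intervalIntegrable _ _)
      (hg.intervalIntegrable _ _)]

section TravellingWaves

variable {E : Type*} [NormedAddCommGroup E] [NormedSpace ℝ E] {f f' : ℝ → E}

theorem hasDerivAt_sub_comp_time (hf : ∀ y, HasDerivAt f (f' y) y) (a b x t : ℝ) :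
    HasDerivAt (fun s => f (a * (s + x)) - f (b * (s - x)))
      (a • f' (a * (t + x)) - b • f' (b * (t - x))) t := by
  have ha : HasDerivAt (fun s => a * (s + x)) a t := by
    simpa using ((hasDerivAt_id t).add_const x).const_mul a
  have hb : HasDerivAt (fun s => b * (s - x)) b t := by
    simpa using ((hasDerivAt_id t).sub_const x).const_mul b
  exact ((hf _).scomp t ha).sub ((hf _).scomp t hb)

theorem hasDerivAt_sub_comp_space (hf : ∀ y, HasDerivAt f (f' y) y) (a b x t : ℝ) :
    HasDerivAt (fun y => f (a * (t + y)) - f (b * (t - y)))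
      (a • f' (a * (t + x)) + b • f' (b * (t - x))) x := by
  have ha : HasDerivAt (fun y => a * (t + y)) a x := by
    simpa using ((hasDerivAt_id x).const_add t).const_mul a
  have hb : HasDerivAt (fun y => b * (t - y)) (-b) x := by
    simpa using ((hasDerivAt_id x).const_sub t).const_mul b
  exact (((hf _).scomp x ha).sub ((hf _).scomp x hb)).congr_deriv
    (by rw [neg_smul, sub_neg_eq_add])

end TravellingWaves

theorem integral_energy_density_of_eq_sub_comp {f f' : ℝ → ℂ} (hf : ∀ y, HasDerivAt f (f' y) y)
    (hf' : Continuous f') {φ : ℝ → ℝ → ℂ} {v : ℝ}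
    (hφ : ∀ x s, φ x s = f ((1 - v) * (s + x)) - f ((1 + v) * (s - x))) (L t : ℝ) :
    ∫ x in v * t..L + v * t, (‖deriv (fun s => φ x s) t + (v : ℂ) * deriv (fun y => φ y t) x‖ ^ 2
        + (1 - v ^ 2) * ‖deriv (fun y => φ y t) x‖ ^ 2)
      = 2 * (1 - v ^ 2) *
          ∫ y in (1 - v ^ 2) * t - (1 + v) * L..(1 - v ^ 2) * t + (1 - v) * L, ‖f' y‖ ^ 2 := by
  have hdt (x : ℝ) : deriv (fun s => φ x s) t
      = (1 - v) • f' ((1 - v) * (t + x)) - (1 + v) • f' ((1 + v) * (t - x)) := by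
    simp_rw [hφ]
    exact (hasDerivAt_sub_comp_time hf _ _ x t).deriv
  have hdx (x : ℝ) : deriv (fun y => φ y t) x
      = (1 - v) • f' ((1 - v) * (t + x)) + (1 + v) • f' ((1 + v) * (t - x)) := by
    simp_rw [hφ]
    exact (hasDerivAt_sub_comp_space hf _ _ x t).deriv
  simp_rw [hdt, hdx, norm_sq_energy_density]
  rw [intervalIntegral.integral_const_mul]
  exact congrArg _
    (integral_add_comp_characteristics (g := fun y => ‖f' y‖ ^ 2) (by fun_prop) v L t)

theorem stmt5_general (L v : ℝ) (hL : 0 < L)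
    (S : Finset ℤ) (c : ℤ → ℂ) (φ : ℝ → ℝ → ℂ)
    (hφ : ∀ x t : ℝ, φ x t = ∑ n ∈ S, c n * (Complex.exp ((n : ℂ) * (Real.pi : ℂ) * Complex.I * ((1 : ℂ) - (v : ℂ)) * ((t : ℂ) + (x : ℂ)) / (L : ℂ)) - Complex.exp ((n : ℂ) * (Real.pi : ℂ) * Complex.I * ((1 : ℂ) + (v : ℂ)) * ((t : ℂ) - (x : ℂ)) / (L : ℂ)))) :
    ∀ t : ℝ, 0 ≤ t →
      (1 / 2) * ∫ x in (v * t)..(L + v * t),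
          (‖deriv (fun s => φ x s) t + (v : ℂ) * deriv (fun y => φ y t) x‖ ^ 2
            + (1 - v ^ 2) * ‖deriv (fun y => φ y t) x‖ ^ 2)
        = (2 * Real.pi ^ 2 * (1 - v ^ 2) / L) * ∑ n ∈ S, ‖(n : ℂ) * c n‖ ^ 2 := by
  intro t _
  have hLC : (L : ℂ) ≠ 0 := ofReal_ne_zero.mpr hL.ne'
  have hφ' (x s : ℝ) :
      φ x s = trigPoly S c (π / L) ((1 - v) * (s + x))
        - trigPoly S c (π / L) ((1 + v) * (s - x)) := by
    rw [hφ, trigPoly, trigPoly, ← Finset.sum_sub_distrib]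
    refine Finset.sum_congr rfl fun n _ => ?_
    rw [mul_sub]
    push_cast
    congr 3 <;> field_simp
  rw [integral_energy_density_of_eq_sub_comp (hasDerivAt_trigPoly S c _) (by fun_prop) hφ']
  have hnorm (y : ℝ) : ‖(π / L : ℝ) * I * trigPoly S (fun n => n * c n) (π / L) y‖ ^ 2
      = (π / L) ^ 2 * ‖trigPoly S (fun n => n * c n) (π / L) y‖ ^ 2 := by
    rw [norm_mul, norm_mul, norm_I, norm_real, Real.norm_of_nonneg (by positivity), mul_one,
      mul_pow]
  simp_rw [hnorm]
  rw [intervalIntegral.integral_const_mul,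
    show (1 - v ^ 2) * t + (1 - v) * L = (1 - v ^ 2) * t - (1 + v) * L + 2 * π / (π / L) by
      field_simp; ring,
    integral_norm_sq_trigPoly _ _ (by positivity)]
  field_simp

theorem stmt5 (L v : ℝ) (hL : 0 < L) (hv0 : 0 < v) (hv1 : v < 1)
    (S : Finset ℤ) (hS : ∀ n ∈ S, n ≠ 0) (c : ℤ → ℂ) (φ : ℝ → ℝ → ℂ)
    (hφ : ∀ x t : ℝ, φ x t = ∑ n ∈ S, c n * (Complex.exp ((n : ℂ) * (Real.pi : ℂ) * Complex.I * ((1 : ℂ) - (v : ℂ)) * ((t : ℂ) + (x : ℂ)) / (L : ℂ)) - Complex.exp ((n : ℂ) * (Real.pi : ℂ) * Complex.I * ((1 : ℂ) + (v : ℂ)) * ((t : ℂ) - (x : ℂ)) / (L : ℂ)))) :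
    ∀ t : ℝ, 0 ≤ t →
      (1 / 2) * ∫ x in (v * t)..(L + v * t),
          (‖deriv (fun s => φ x s) t + (v : ℂ) * deriv (fun y => φ y t) x‖ ^ 2
            + (1 - v ^ 2) * ‖deriv (fun y => φ y t) x‖ ^ 2)
        = (2 * Real.pi ^ 2 * (1 - v ^ 2) / L) * ∑ n ∈ S, ‖(n : ℂ) * c n‖ ^ 2 :=
  stmt5_general L v hL S c φ hφ
end

section
/- Suppose φ : ℝ × [0,∞) → ℝ is twice continuously differentiable, satisfies φ_tt = φ_xx for x ∈ (vt, L+vt) and t > 0, and φ(vt,t) = φ(L+vt,t) = 0 for all t ≥ 0. Then the energy 𝓔_v(t) = (1/2)∫_{vt}^{L+vt} ((φ_t + vφ_x)² + (1-v²)φ_x²) dx is constant in t. -/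
/-!
In the coordinates `y = x - v t` comoving with the boundary the domain becomes the fixed interval
`[0, L]`. Writing `a = φ_t + v φ_x` and `b = φ_x`, the wave equation and the symmetry of second
derivatives give the local conservation law
`∂_t (a² + (1 - v²) b²) = ∂_y (2 (1 - v²) a b + 2 v a²)`.
Differentiating the energy under the integral sign thus leaves only the flux at `y = 0` and
`y = L`, where `a` is the derivative of `φ` along the boundary curve `t ↦ (x₀ + v t, t)` and so
vanishes by the Dirichlet condition.
-/

open MeasureTheory Set Filter Topology

section Calculus

variable {E F : Type*} [NormedAddCommGroup E] [NormedSpace ℝ E]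
  [NormedAddCommGroup F] [NormedSpace ℝ F]

theorem hasDerivAt_fderiv_apply_comp {u : E → F} {c : ℝ → E} {c' : E} {s : ℝ} (w : E)
    (hu : DifferentiableAt ℝ (fderiv ℝ u) (c s)) (hc : HasDerivAt c c' s) :
    HasDerivAt (fun r => fderiv ℝ u (c r) w) (fderiv ℝ (fderiv ℝ u) (c s) c' w) s :=
  (ContinuousLinearMap.apply ℝ F w).hasFDerivAt.comp_hasDerivAt s
    (hu.hasFDerivAt.comp_hasDerivAt s hc)

theorem fderiv_apply_eq_zero_of_comp_eventuallyEq_zero {u : E → F} {c : ℝ → E} {c' : E} {t : ℝ}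
    (hu : DifferentiableAt ℝ u (c t)) (hc : HasDerivAt c c' t)
    (hzero : (fun s => u (c s)) =ᶠ[𝓝 t] 0) : fderiv ℝ u (c t) c' = 0 :=
  ((hu.hasFDerivAt.comp_hasDerivAt t hc).congr_of_eventuallyEq hzero.symm).unique
    (hasDerivAt_const t 0)

theorem hasDerivAt_intervalIntegral_of_continuous [CompleteSpace F] {f f' : ℝ → ℝ → F}
    {a b t₀ : ℝ} (hf : Continuous (Function.uncurry f)) (hf' : Continuous (Function.uncurry f'))
    (hderiv : ∀ t y, HasDerivAt (fun s => f s y) (f' t y) t) :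
    HasDerivAt (fun t => ∫ y in a..b, f t y) (∫ y in a..b, f' t₀ y) t₀ := by
  obtain ⟨C, hC⟩ := (isCompact_closedBall t₀ 1 |>.prod isCompact_uIcc :
    IsCompact (Metric.closedBall t₀ 1 ×ˢ uIcc a b)).exists_bound_of_continuousOn hf'.continuousOn
  refine (intervalIntegral.hasDerivAt_integral_of_dominated_loc_of_deriv_le (bound := fun _ => C)
    (Metric.ball_mem_nhds t₀ one_pos)
    (.of_forall fun t => (hf.comp (Continuous.prodMk_right t)).aestronglyMeasurable)
    ((hf.comp (Continuous.prodMk_right t₀)).intervalIntegrable a b)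
    (hf'.comp (Continuous.prodMk_right t₀)).aestronglyMeasurable
    (.of_forall fun y hy t ht => hC (t, y) ⟨Metric.ball_subset_closedBall ht, uIoc_subset_uIcc hy⟩)
    intervalIntegrable_const (.of_forall fun y _ t _ => hderiv t y)).2

theorem deriv_comp_prodMk_right {u : ℝ × ℝ → F} {x t : ℝ} (hu : DifferentiableAt ℝ u (x, t)) :
    deriv (fun s => u (x, s)) t = fderiv ℝ u (x, t) (0, 1) :=
  (hu.hasFDerivAt.comp_hasDerivAt t ((hasDerivAt_const t x).prodMk (hasDerivAt_id t))).deriv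

theorem deriv_comp_prodMk_left {u : ℝ × ℝ → F} {x t : ℝ} (hu : DifferentiableAt ℝ u (x, t)) :
    deriv (fun y => u (y, t)) x = fderiv ℝ u (x, t) (1, 0) :=
  (hu.hasFDerivAt.comp_hasDerivAt x ((hasDerivAt_id x).prodMk (hasDerivAt_const x t))).deriv

theorem deriv_deriv_comp_prodMk_right {u : ℝ × ℝ → F} (hu : ContDiff ℝ 2 u) (x t : ℝ) :
    deriv (fun s => deriv (fun s' => u (x, s')) s) t
      = fderiv ℝ (fderiv ℝ u) (x, t) (0, 1) (0, 1) := by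
  simp only [deriv_comp_prodMk_right ((hu.differentiable two_ne_zero) _)]
  exact (hasDerivAt_fderiv_apply_comp _ ((hu.fderiv_right le_rfl).differentiable one_ne_zero _)
    ((hasDerivAt_const t x).prodMk (hasDerivAt_id t))).deriv

theorem deriv_deriv_comp_prodMk_left {u : ℝ × ℝ → F} (hu : ContDiff ℝ 2 u) (x t : ℝ) :
    deriv (fun y => deriv (fun y' => u (y', t)) y) x
      = fderiv ℝ (fderiv ℝ u) (x, t) (1, 0) (1, 0) := by
  simp only [deriv_comp_prodMk_left ((hu.differentiable two_ne_zero) _)]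
  exact (hasDerivAt_fderiv_apply_comp _ ((hu.fderiv_right le_rfl).differentiable one_ne_zero _)
    ((hasDerivAt_id x).prodMk (hasDerivAt_const x t))).deriv

theorem continuous_fderiv_comoving {f : ℝ × ℝ → F} (v : ℝ) (hf : ContDiff ℝ 1 f) (w : ℝ × ℝ) :
    Continuous (fun p : ℝ × ℝ => fderiv ℝ f (p.2 + v * p.1, p.1) w) :=
  ((hf.continuous_fderiv one_ne_zero).clm_apply continuous_const).comp (by fun_prop)

end Calculus

namespace MovingWave

variable (u : ℝ × ℝ → ℝ) (v : ℝ)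

noncomputable def energyDensity (t y : ℝ) : ℝ :=
  fderiv ℝ u (y + v * t, t) (v, 1) ^ 2 + (1 - v ^ 2) * fderiv ℝ u (y + v * t, t) (1, 0) ^ 2

noncomputable def energyDensityRate (t y : ℝ) : ℝ :=
  2 * fderiv ℝ u (y + v * t, t) (v, 1) * fderiv ℝ (fderiv ℝ u) (y + v * t, t) (v, 1) (v, 1)
    + (1 - v ^ 2) * (2 * fderiv ℝ u (y + v * t, t) (1, 0)
      * fderiv ℝ (fderiv ℝ u) (y + v * t, t) (v, 1) (1, 0))

noncomputable def energyFlux (t y : ℝ) : ℝ :=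
  2 * (1 - v ^ 2) * (fderiv ℝ u (y + v * t, t) (v, 1) * fderiv ℝ u (y + v * t, t) (1, 0))
    + 2 * v * fderiv ℝ u (y + v * t, t) (v, 1) ^ 2

variable {u}

theorem continuous_energyDensity (hu : ContDiff ℝ 1 u) :
    Continuous (Function.uncurry (energyDensity u v)) := by
  have := continuous_fderiv_comoving v hu
  unfold energyDensity Function.uncurry
  fun_prop

theorem continuous_energyDensityRate (hu : ContDiff ℝ 2 u) :
    Continuous (Function.uncurry (energyDensityRate u v)) := by
  have h1 := continuous_fderiv_comoving v (hu.of_le one_le_two)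
  have h2 w w' := (continuous_fderiv_comoving v (hu.fderiv_right le_rfl) w).clm_apply
    (continuous_const (y := w'))
  unfold energyDensityRate Function.uncurry
  fun_prop

theorem hasDerivAt_comoving_time (y t : ℝ) :
    HasDerivAt (fun s : ℝ => (y + v * s, s)) (v, 1) t :=
  (((hasDerivAt_id t).const_mul v).const_add y |>.congr_deriv (mul_one v)).prodMk (hasDerivAt_id t)

theorem hasDerivAt_comoving_space (y t : ℝ) :
    HasDerivAt (fun z : ℝ => (z + v * t, t)) (1, 0) y :=
  ((hasDerivAt_id y).add_const (v * t)).prodMk (hasDerivAt_const y t)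

theorem hasDerivAt_energyDensity (hu : ContDiff ℝ 2 u) (t y : ℝ) :
    HasDerivAt (fun s => energyDensity u v s y) (energyDensityRate u v t y) t := by
  have hu' : Differentiable ℝ (fderiv ℝ u) :=
    (hu.fderiv_right le_rfl).differentiable one_ne_zero
  have h := fun w => hasDerivAt_fderiv_apply_comp w (hu' _) (hasDerivAt_comoving_time v y t)
  exact (((h (v, 1)).pow 2).add (((h (1, 0)).pow 2).const_mul (1 - v ^ 2))).congr_deriv
    (by simp only [energyDensityRate]; ring)

theorem hasDerivAt_energyFlux (hu : ContDiff ℝ 2 u) {t y : ℝ}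
    (hwave : fderiv ℝ (fderiv ℝ u) (y + v * t, t) (0, 1) (0, 1)
      = fderiv ℝ (fderiv ℝ u) (y + v * t, t) (1, 0) (1, 0)) :
    HasDerivAt (fun z => energyFlux u v t z) (energyDensityRate u v t y) y := by
  have hu' : Differentiable ℝ (fderiv ℝ u) :=
    (hu.fderiv_right le_rfl).differentiable one_ne_zero
  have hsymm := (hu.contDiffAt (x := (y + v * t, t))).isSymmSndFDerivAt (by simp) (1, 0) (0, 1)
  have h := fun w => hasDerivAt_fderiv_apply_comp w (hu' _) (hasDerivAt_comoving_space v y t)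
  have hv : ((v, 1) : ℝ × ℝ) = (0, 1) + v • (1, 0) := by simp
  refine ((((h (v, 1)).mul (h (1, 0))).const_mul (2 * (1 - v ^ 2))).add
    (((h (v, 1)).pow 2).const_mul (2 * v))).congr_deriv ?_
  simp only [energyDensityRate, hv, map_add, map_smul, add_apply, smul_apply, smul_eq_mul,
    hwave, hsymm]
  ring

theorem integral_energyDensityRate_eq_zero (hu : ContDiff ℝ 2 u) {L t : ℝ} (hL : 0 ≤ L)
    (hwave : ∀ y ∈ Ioo 0 L, fderiv ℝ (fderiv ℝ u) (y + v * t, t) (0, 1) (0, 1)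
      = fderiv ℝ (fderiv ℝ u) (y + v * t, t) (1, 0) (1, 0))
    (hleft : fderiv ℝ u (v * t, t) (v, 1) = 0) (hright : fderiv ℝ u (L + v * t, t) (v, 1) = 0) :
    ∫ y in 0..L, energyDensityRate u v t y = 0 := by
  have hflux : Continuous (Function.uncurry (energyFlux u v)) := by
    have h := continuous_fderiv_comoving v (hu.of_le one_le_two)
    unfold energyFlux Function.uncurry
    fun_prop
  rw [intervalIntegral.integral_eq_sub_of_hasDeriv_right_of_le hL
    (hflux.comp (Continuous.prodMk_right t)).continuousOn
    (fun y hy => (hasDerivAt_energyFlux v hu (hwave y hy)).hasDerivWithinAt)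
    (((continuous_energyDensityRate v hu).comp (Continuous.prodMk_right t)).intervalIntegrable 0 L)]
  simp [energyFlux, hleft, hright]

theorem fderiv_comoving_eq_zero_of_vanishing (hu : Differentiable ℝ u) {x₀ t : ℝ} (ht : 0 < t)
    (hzero : ∀ s, 0 ≤ s → u (x₀ + v * s, s) = 0) : fderiv ℝ u (x₀ + v * t, t) (v, 1) = 0 :=
  fderiv_apply_eq_zero_of_comp_eventuallyEq_zero (c := fun s => (x₀ + v * s, s)) (hu _)
    (hasDerivAt_comoving_time v x₀ t)
    (eventually_of_mem (Ioi_mem_nhds ht) fun s hs => hzero s hs.le)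

theorem integral_energyDensity_eq_initial (hu : ContDiff ℝ 2 u) {L : ℝ} (hL : 0 ≤ L)
    (hwave : ∀ t, 0 < t → ∀ y ∈ Ioo 0 L, fderiv ℝ (fderiv ℝ u) (y + v * t, t) (0, 1) (0, 1)
      = fderiv ℝ (fderiv ℝ u) (y + v * t, t) (1, 0) (1, 0))
    (hbc : ∀ t, 0 ≤ t → u (v * t, t) = 0 ∧ u (L + v * t, t) = 0) {t : ℝ} (ht : 0 ≤ t) :
    ∫ y in 0..L, energyDensity u v t y = ∫ y in 0..L, energyDensity u v 0 y := by
  have hE (s : ℝ) : HasDerivAt (fun s => ∫ y in 0..L, energyDensity u v s y)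
      (∫ y in 0..L, energyDensityRate u v s y) s :=
    hasDerivAt_intervalIntegral_of_continuous (continuous_energyDensity v (hu.of_le one_le_two))
      (continuous_energyDensityRate v hu) (hasDerivAt_energyDensity v hu)
  have hrate (s : ℝ) (hs : 0 < s) : ∫ y in 0..L, energyDensityRate u v s y = 0 := by
    have hdiff := hu.differentiable two_ne_zero
    refine integral_energyDensityRate_eq_zero v hu hL (hwave s hs) ?_
      (fderiv_comoving_eq_zero_of_vanishing v hdiff hs fun r hr => (hbc r hr).2)
    simpa using fderiv_comoving_eq_zero_of_vanishing v hdiff (x₀ := 0) hs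
      fun r hr => by simpa using (hbc r hr).1
  rcases ht.eq_or_lt with rfl | ht
  · rfl
  obtain ⟨c, hc, hslope⟩ := exists_hasDerivAt_eq_slope _ _ ht
    (fun s _ => (hE s).continuousAt.continuousWithinAt) fun s _ => hE s
  rw [hrate c hc.1, eq_comm, div_eq_zero_iff, sub_eq_zero] at hslope
  exact hslope.resolve_right (sub_ne_zero.2 ht.ne')

theorem integral_energy_eq_integral_energyDensity (hu : Differentiable ℝ u) (L t : ℝ) :
    ∫ x in (v * t)..(L + v * t),
        ((deriv (fun s => u (x, s)) t + v * deriv (fun y => u (y, t)) x) ^ 2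
          + (1 - v ^ 2) * deriv (fun y => u (y, t)) x ^ 2)
      = ∫ y in 0..L, energyDensity u v t y := by
  have hv : ((v, 1) : ℝ × ℝ) = (0, 1) + v • (1, 0) := by simp
  simp only [deriv_comp_prodMk_right (hu _), deriv_comp_prodMk_left (hu _), energyDensity, hv,
    map_add, map_smul, smul_eq_mul]
  simpa only [zero_add] using (intervalIntegral.integral_comp_add_right (a := 0) (b := L)
    (fun x => (fderiv ℝ u (x, t) (0, 1) + v * fderiv ℝ u (x, t) (1, 0)) ^ 2
      + (1 - v ^ 2) * fderiv ℝ u (x, t) (1, 0) ^ 2) (v * t)).symm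

end MovingWave

open MovingWave in
theorem stmt6_general (L v : ℝ) (hL : 0 < L)
    (φ : ℝ → ℝ → ℝ)
    (hreg : ContDiff ℝ 2 (fun p : ℝ × ℝ => φ p.1 p.2))
    (hwave : ∀ t : ℝ, 0 < t → ∀ x : ℝ, v * t < x → x < L + v * t →
      deriv (fun s => deriv (fun s' => φ x s') s) t
        = deriv (fun y => deriv (fun y' => φ y' t) y) x)
    (hbc : ∀ t : ℝ, 0 ≤ t → φ (v * t) t = 0 ∧ φ (L + v * t) t = 0) :
    ∀ t : ℝ, 0 ≤ t →
      (1 / 2) * ∫ x in (v * t)..(L + v * t),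
          ((deriv (fun s => φ x s) t + v * deriv (fun y => φ y t) x) ^ 2
            + (1 - v ^ 2) * (deriv (fun y => φ y t) x) ^ 2)
        = (1 / 2) * ∫ x in (0 : ℝ)..L,
            ((deriv (fun s => φ x s) 0 + v * deriv (fun y => φ y 0) x) ^ 2
              + (1 - v ^ 2) * (deriv (fun y => φ y 0) x) ^ 2) := by
  have hwave' : ∀ t, 0 < t → ∀ y ∈ Ioo 0 L,
      fderiv ℝ (fderiv ℝ fun p : ℝ × ℝ => φ p.1 p.2) (y + v * t, t) (0, 1) (0, 1)
        = fderiv ℝ (fderiv ℝ fun p : ℝ × ℝ => φ p.1 p.2) (y + v * t, t) (1, 0) (1, 0) := by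
    intro t ht y hy
    rw [← deriv_deriv_comp_prodMk_right hreg, ← deriv_deriv_comp_prodMk_left hreg]
    exact hwave t ht (y + v * t) (by linarith [hy.1]) (by linarith [hy.2])
  intro t ht
  have hdiff := hreg.differentiable two_ne_zero
  have h0 := integral_energy_eq_integral_energyDensity v hdiff L 0
  simp only [mul_zero, add_zero] at h0
  rw [integral_energy_eq_integral_energyDensity v hdiff, h0,
    integral_energyDensity_eq_initial v hreg hL.le hwave' hbc ht]

theorem stmt6 (L v : ℝ) (hL : 0 < L) (hv0 : 0 < v) (hv1 : v < 1)
    (φ : ℝ → ℝ → ℝ)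
    (hreg : ContDiff ℝ 2 (fun p : ℝ × ℝ => φ p.1 p.2))
    (hwave : ∀ t : ℝ, 0 < t → ∀ x : ℝ, v * t < x → x < L + v * t →
      deriv (fun s => deriv (fun s' => φ x s') s) t
        = deriv (fun y => deriv (fun y' => φ y' t) y) x)
    (hbc : ∀ t : ℝ, 0 ≤ t → φ (v * t) t = 0 ∧ φ (L + v * t) t = 0) :
    ∀ t : ℝ, 0 ≤ t →
      (1 / 2) * ∫ x in (v * t)..(L + v * t),
          ((deriv (fun s => φ x s) t + v * deriv (fun y => φ y t) x) ^ 2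
            + (1 - v ^ 2) * (deriv (fun y => φ y t) x) ^ 2)
        = (1 / 2) * ∫ x in (0 : ℝ)..L,
            ((deriv (fun s => φ x s) 0 + v * deriv (fun y => φ y 0) x) ^ 2
              + (1 - v ^ 2) * (deriv (fun y => φ y 0) x) ^ 2) :=
  stmt6_general L v hL φ hreg hwave hbc
end

section
/- Boundary observability at one endpoint for finite series: if φ(x,t) = Σ_{n∈S} c_n (exp(nπi(1-v)(t+x)/L) − exp(nπi(1+v)(t-x)/L)) with S a finite set of nonzero integers, and 𝓔_v := (2π²(1-v²)/L)Σ_{n∈S}|n c_n|², then ∫_0^{T_v} |∂ₓφ(vt,t)|² dt = (4/(1-v²)²)·𝓔_v, where T_v = 2L/(1-v²). -/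
/-!
On the ray `x = v t` the two travelling waves `e^{nπi(1-v)(t+x)/L}` and `e^{nπi(1+v)(t-x)/L}` have
the same phase `n ω t` with `ω = π(1-v²)/L`, so `∂ₓφ(vt, t)` is the trigonometric polynomial
`∑ (2nπi/L) cₙ e^{inωt}`. Its modes are orthogonal over one period `T_v = 2π/ω`, and Parseval gives
`∫₀^{T_v} |∂ₓφ(vt, t)|² dt = T_v ∑ |2nπ cₙ / L|²`.
-/

open MeasureTheory Complex Real ComplexConjugate

theorem integral_exp_int_mul_mul_I {ω : ℝ} (hω : ω ≠ 0) (k : ℤ) :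
    ∫ t in (0 : ℝ)..2 * π / ω, exp (k * ω * I * t) = if k = 0 then ((2 * π / ω : ℝ) : ℂ) else 0 := by
  split_ifs with hk
  · simp [hk]
  · have hc : (k : ℂ) * ω * I ≠ 0 := by simp [hk, hω, I_ne_zero]
    have hω' : (ω : ℂ) ≠ 0 := ofReal_ne_zero.mpr hω
    have hperiod : (k : ℂ) * ω * I * ((2 * π / ω : ℝ) : ℂ) = k * (2 * π * I) := by
      push_cast; field_simp
    rw [integral_exp_mul_complex hc, hperiod, exp_int_mul_two_pi_mul_I]
    simp

theorem sq_norm_sum_exp (S : Finset ℤ) (a : ℤ → ℂ) (ω t : ℝ) :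
    ((‖∑ n ∈ S, a n * exp (n * ω * I * t)‖ ^ 2 : ℝ) : ℂ)
      = ∑ n ∈ S, ∑ m ∈ S, a n * conj (a m) * exp ((n - m : ℤ) * ω * I * t) := by
  rw [ofReal_pow, ← mul_conj', map_sum, Finset.sum_mul_sum]
  refine Finset.sum_congr rfl fun n _ => Finset.sum_congr rfl fun m _ => ?_
  have hconj : conj (exp (m * ω * I * t)) = exp (-(m * ω * I * t)) := by
    rw [← exp_conj]; simp
  rw [map_mul, hconj, Int.cast_sub, sub_mul, sub_mul, sub_mul, sub_eq_add_neg, Complex.exp_add]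
  ring

theorem integral_sq_norm_sum_exp {ω : ℝ} (hω : ω ≠ 0) (S : Finset ℤ) (a : ℤ → ℂ) :
    ∫ t in (0 : ℝ)..2 * π / ω, ‖∑ n ∈ S, a n * exp (n * ω * I * t)‖ ^ 2
      = 2 * π / ω * ∑ n ∈ S, ‖a n‖ ^ 2 := by
  apply ofReal_injective
  rw [← intervalIntegral.integral_ofReal]
  simp_rw [sq_norm_sum_exp]
  rw [intervalIntegral.integral_finsetSum fun n _ => (by fun_prop : Continuous _).intervalIntegrable _ _]
  have hint : ∀ n m : ℤ, IntervalIntegrable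
      (fun t : ℝ => a n * conj (a m) * exp ((n - m : ℤ) * ω * I * t)) volume 0 (2 * π / ω) :=
    fun n m => (by fun_prop : Continuous _).intervalIntegrable _ _
  simp_rw [intervalIntegral.integral_finsetSum fun m _ => hint _ m,
    intervalIntegral.integral_const_mul, integral_exp_int_mul_mul_I hω, sub_eq_zero]
  simp only [mul_ite, mul_zero, Finset.sum_ite_eq, Finset.sum_ite_mem, Finset.inter_self, mul_conj']
  push_cast
  rw [Finset.mul_sum, Finset.sum_congr rfl fun n _ => mul_comm _ _]

theorem hasDerivAt_sum_exp_add_sub_exp_sub (S : Finset ℤ) (c α β : ℤ → ℂ) (t x : ℝ) :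
    HasDerivAt (fun y : ℝ => ∑ n ∈ S, c n * (exp (α n * (t + y)) - exp (β n * (t - y))))
      (∑ n ∈ S, c n * (α n * exp (α n * (t + x)) + β n * exp (β n * (t - x)))) x := by
  refine HasDerivAt.fun_sum fun n _ => ?_
  have hy : HasDerivAt (fun y : ℝ => (y : ℂ)) 1 x := (hasDerivAt_id x).ofReal_comp
  have h₁ := ((hy.const_add (t : ℂ)).const_mul (α n)).cexp
  have h₂ := ((hy.const_sub (t : ℂ)).const_mul (β n)).cexp
  exact ((h₁.fun_sub h₂).const_mul (c n)).congr_deriv (by ring)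

theorem deriv_sum_travelling_waves_along_ray (L v : ℝ) (S : Finset ℤ) (c : ℤ → ℂ) (t : ℝ) :
    deriv (fun y : ℝ => ∑ n ∈ S, c n * (exp (n * π * I * (1 - v) * (t + y) / L)
        - exp (n * π * I * (1 + v) * (t - y) / L))) (v * t)
      = ∑ n ∈ S, (2 * π * I / L * n * c n) * exp (n * ((π * (1 - v ^ 2) / L : ℝ) : ℂ) * I * t) := by
  have hwaves : (fun y : ℝ => ∑ n ∈ S, c n * (exp (n * π * I * (1 - v) * (t + y) / L)
        - exp (n * π * I * (1 + v) * (t - y) / L))) = fun y : ℝ => ∑ n ∈ S, c n *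
        (exp (n * π * I * (1 - v) / L * (t + y)) - exp (n * π * I * (1 + v) / L * (t - y))) := by
    ext y
    simp only [mul_div_right_comm _ _ (L : ℂ)]
  rw [hwaves, (hasDerivAt_sum_exp_add_sub_exp_sub S c _ _ t (v * t)).deriv]
  refine Finset.sum_congr rfl fun n _ => ?_
  have h₁ : (n * π * I * (1 - v) / L * (t + (v * t : ℝ)) : ℂ) = n * ((π * (1 - v ^ 2) / L : ℝ) : ℂ) * I * t := by
    push_cast; ring
  have h₂ : (n * π * I * (1 + v) / L * (t - (v * t : ℝ)) : ℂ) = n * ((π * (1 - v ^ 2) / L : ℝ) : ℂ) * I * t := by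
    push_cast; ring
  rw [h₁, h₂]
  ring

theorem stmt12_general (L v : ℝ) (hL : 0 < L) (hv0 : 0 < v) (hv1 : v < 1)
    (S : Finset ℤ) (c : ℤ → ℂ) (φ : ℝ → ℝ → ℂ)
    (hφ : ∀ x t : ℝ, φ x t = ∑ n ∈ S, c n * (Complex.exp ((n : ℂ) * (Real.pi : ℂ) * Complex.I * ((1 : ℂ) - (v : ℂ)) * ((t : ℂ) + (x : ℂ)) / (L : ℂ)) - Complex.exp ((n : ℂ) * (Real.pi : ℂ) * Complex.I * ((1 : ℂ) + (v : ℂ)) * ((t : ℂ) - (x : ℂ)) / (L : ℂ)))) :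
    ∫ t in (0 : ℝ)..(2 * L / (1 - v ^ 2)),
        (‖deriv (fun y => φ y t) (v * t)‖) ^ 2
      = (4 / (1 - v ^ 2) ^ 2) *
          ((2 * Real.pi ^ 2 * (1 - v ^ 2) / L) * ∑ n ∈ S, (‖(n : ℂ) * c n‖) ^ 2) := by
  have hv : 0 < 1 - v ^ 2 := by nlinarith
  have hω : π * (1 - v ^ 2) / L ≠ 0 := by positivity
  have hT : 2 * L / (1 - v ^ 2) = 2 * π / (π * (1 - v ^ 2) / L) := by field_simp
  have hφ' : ∀ t, (fun y => φ y t) = fun y : ℝ => ∑ n ∈ S, c n *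
      (exp (n * π * I * (1 - v) * (t + y) / L) - exp (n * π * I * (1 + v) * (t - y) / L)) :=
    fun t => funext fun y => hφ y t
  simp_rw [hφ', deriv_sum_travelling_waves_along_ray, hT, integral_sq_norm_sum_exp hω, Finset.mul_sum]
  refine Finset.sum_congr rfl fun n _ => ?_
  simp only [mul_assoc _ (n : ℂ), norm_mul, norm_div, norm_I, Complex.norm_two, norm_real,
    Real.norm_of_nonneg pi_pos.le, Real.norm_of_nonneg hL.le]
  field_simp
  ring

theorem stmt12 (L v : ℝ) (hL : 0 < L) (hv0 : 0 < v) (hv1 : v < 1)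
    (S : Finset ℤ) (hS : ∀ n ∈ S, n ≠ 0) (c : ℤ → ℂ) (φ : ℝ → ℝ → ℂ)
    (hφ : ∀ x t : ℝ, φ x t = ∑ n ∈ S, c n * (Complex.exp ((n : ℂ) * (Real.pi : ℂ) * Complex.I * ((1 : ℂ) - (v : ℂ)) * ((t : ℂ) + (x : ℂ)) / (L : ℂ)) - Complex.exp ((n : ℂ) * (Real.pi : ℂ) * Complex.I * ((1 : ℂ) + (v : ℂ)) * ((t : ℂ) - (x : ℂ)) / (L : ℂ)))) :
    ∫ t in (0 : ℝ)..(2 * L / (1 - v ^ 2)),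
        (‖deriv (fun y => φ y t) (v * t)‖) ^ 2
      = (4 / (1 - v ^ 2) ^ 2) *
          ((2 * Real.pi ^ 2 * (1 - v ^ 2) / L) * ∑ n ∈ S, (‖(n : ℂ) * c n‖) ^ 2) :=
  stmt12_general L v hL hv0 hv1 S c φ hφ
end

section
/- Two-endpoint observability identity for finite series: with φ(x,t) = Σ_{n∈S} c_n (exp(nπi(1-v)(t+x)/L) − exp(nπi(1+v)(t-x)/L)) over a finite set S of nonzero integers, one has ∫_0^{L/(1+v)} |∂ₓφ(vt,t)|² dt + ∫_0^{L/(1-v)} |∂ₓφ(L+vt,t)|² dt = (8π²/(L(1-v²)))·Σ_{n∈S} |n c_n|². -/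
/-!
Along the left endpoint `x = v t` the two travelling waves are in phase, so `∂ₓφ(v t, t)` is the
trigonometric polynomial `g t = ∑ (2πi n c_n / L) e^{2πi n t / P}` with period
`P = L/(1+v) + L/(1-v) = 2L/(1-v²)`. Along the right endpoint the phases differ from those of `g`
by the shift `t ↦ t + L/(1+v)`, up to multiples of `2πi`, so `∂ₓφ(L + v t, t) = g (t + L/(1+v))`.
The two observation integrals therefore glue to `∫₀^P |g|²`, which Parseval evaluates.
-/

open MeasureTheory Complex Real
open scoped ComplexConjugate

theorem ofReal_integral_norm_sq_sum {ι : Type*} (S : Finset ι) (f : ι → ℝ → ℂ)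
    (hf : ∀ i ∈ S, Continuous (f i)) (a b : ℝ) :
    ((∫ t in a..b, ‖∑ i ∈ S, f i t‖ ^ 2 : ℝ) : ℂ) =
      ∑ i ∈ S, ∑ j ∈ S, ∫ t in a..b, f i t * conj (f j t) := by
  have hcont : ∀ i ∈ S, ∀ j ∈ S, Continuous fun t => f i t * conj (f j t) :=
    fun i hi j hj => (hf i hi).mul (continuous_conj.comp (hf j hj))
  simp_rw [← intervalIntegral.integral_ofReal, ofReal_pow, ← mul_conj', map_sum, Finset.sum_mul_sum]
  calc _ = ∑ i ∈ S, ∫ t in a..b, ∑ j ∈ S, f i t * conj (f j t) :=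
        intervalIntegral.integral_finsetSum fun i hi =>
          (continuous_finsetSum S (hcont i hi)).intervalIntegrable a b
    _ = _ := Finset.sum_congr rfl fun i hi => intervalIntegral.integral_finsetSum fun j hj =>
      (hcont i hi j hj).intervalIntegrable a b

theorem integral_exp_two_pi_I_int_mul_div {P : ℝ} (hP : P ≠ 0) (k : ℤ) :
    ∫ t in (0 : ℝ)..P, exp (2 * π * I * k * t / P) = if k = 0 then (P : ℂ) else 0 := by
  split_ifs with hk
  · simp [hk]
  · have hc : 2 * π * I * k / P ≠ 0 := by simp [hk, hP, pi_ne_zero]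
    have := integral_exp_mul_complex (a := 0) (b := P) hc
    simp_rw [div_mul_eq_mul_div] at this
    rw [this]
    have hP' : (P : ℂ) ≠ 0 := by exact_mod_cast hP
    rw [mul_div_cancel_right₀ _ hP', ofReal_zero, mul_zero, zero_div, Complex.exp_zero,
      mul_comm (2 * π * I) (k : ℂ), exp_int_mul_two_pi_mul_I, sub_self, zero_div]

theorem integral_norm_sq_fourier_sum {P : ℝ} (hP : P ≠ 0) (S : Finset ℤ) (a : ℤ → ℂ) :
    ∫ t in (0 : ℝ)..P, ‖∑ n ∈ S, a n * exp (2 * π * I * n * t / P)‖ ^ 2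
      = P * ∑ n ∈ S, ‖a n‖ ^ 2 := by
  apply ofReal_injective
  rw [ofReal_integral_norm_sq_sum S _ (fun n _ => by fun_prop)]
  have hterm : ∀ n m : ℤ, ∀ t : ℝ, a n * exp (2 * π * I * n * t / P) *
      conj (a m * exp (2 * π * I * m * t / P))
        = a n * conj (a m) * exp (2 * π * I * ((n - m : ℤ) : ℂ) * t / P) := by
    intro n m t
    rw [map_mul, ← exp_conj]
    simp only [map_div₀, map_mul, map_ofNat, conj_ofReal, conj_I, map_intCast]
    rw [mul_mul_mul_comm, ← Complex.exp_add]
    push_cast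
    ring_nf
  simp_rw [hterm, intervalIntegral.integral_const_mul, integral_exp_two_pi_I_int_mul_div hP,
    sub_eq_zero, mul_ite, mul_zero, Finset.sum_ite_eq]
  rw [Finset.sum_congr rfl fun n hn => if_pos hn, ofReal_mul, ofReal_sum, Finset.mul_sum]
  exact Finset.sum_congr rfl fun n _ => by rw [mul_conj', mul_comm, ofReal_pow]

theorem deriv_sum_exp_add_sub_exp {ι : Type*} (S : Finset ι) (c α β E : ι → ℂ) (t x : ℝ)
    (hα : ∀ n ∈ S, exp (α n * (t + x)) = E n) (hβ : ∀ n ∈ S, exp (β n * (t - x)) = E n) :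
    deriv (fun y : ℝ => ∑ n ∈ S, c n * (exp (α n * (t + y)) - exp (β n * (t - y)))) x
      = ∑ n ∈ S, (α n + β n) * c n * E n := by
  refine (HasDerivAt.fun_sum fun n hn => ?_).deriv
  have hplus : HasDerivAt (fun z : ℂ => exp (α n * (t + z))) (exp (α n * (t + x)) * (α n * 1)) x :=
    (((hasDerivAt_id _).const_add _).const_mul _).cexp
  have hminus : HasDerivAt (fun z : ℂ => exp (β n * (t - z))) (exp (β n * (t - x)) * (β n * -1)) x :=
    (((hasDerivAt_id _).const_sub _).const_mul _).cexp
  exact ((hplus.sub hminus).const_mul (c n)).comp_ofReal.congr_deriv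
    (by rw [hα n hn, hβ n hn]; ring)

noncomputable section Wave

variable (L v : ℝ) (S : Finset ℤ) (c : ℤ → ℂ)

def wave (x t : ℝ) : ℂ :=
  ∑ n ∈ S, c n * (exp (n * π * I * (1 - v) / L * (t + x)) - exp (n * π * I * (1 + v) / L * (t - x)))

def waveTrace (t : ℝ) : ℂ :=
  ∑ n ∈ S, 2 * π * I / L * (n * c n) * exp (2 * π * I * n * t / (↑(L / (1 + v) + L / (1 - v)) : ℂ))

variable {L v}

theorem deriv_wave_left (hL : L ≠ 0) (hvp : 1 + v ≠ 0) (hvm : 1 - v ≠ 0) (t : ℝ) :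
    deriv (fun y => wave L v S c y t) (v * t) = waveTrace L v S c t := by
  have hL' : (L : ℂ) ≠ 0 := by exact_mod_cast hL
  have hvp' : (1 + v : ℂ) ≠ 0 := by exact_mod_cast hvp
  have hvm' : (1 - v : ℂ) ≠ 0 := by exact_mod_cast hvm
  unfold wave waveTrace
  rw [deriv_sum_exp_add_sub_exp S c _ _
    (fun n => exp (2 * π * I * n * t / (↑(L / (1 + v) + L / (1 - v)) : ℂ)))]
  · refine Finset.sum_congr rfl fun n _ => ?_
    field_simp
    ring
  all_goals
    intro n _
    push_cast
    congr 1
    field_simp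
    ring

theorem deriv_wave_right (hL : L ≠ 0) (hvp : 1 + v ≠ 0) (hvm : 1 - v ≠ 0) (t : ℝ) :
    deriv (fun y => wave L v S c y t) (L + v * t) = waveTrace L v S c (t + L / (1 + v)) := by
  have hL' : (L : ℂ) ≠ 0 := by exact_mod_cast hL
  have hvp' : (1 + v : ℂ) ≠ 0 := by exact_mod_cast hvp
  have hvm' : (1 - v : ℂ) ≠ 0 := by exact_mod_cast hvm
  unfold wave waveTrace
  rw [deriv_sum_exp_add_sub_exp S c _ _
    (fun n => exp (2 * π * I * n * ((t + L / (1 + v) : ℝ) : ℂ) / (↑(L / (1 + v) + L / (1 - v)) : ℂ)))]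
  · refine Finset.sum_congr rfl fun n _ => ?_
    field_simp
    ring
  · intro n _
    push_cast
    congr 1
    field_simp
    ring
  · intro n _
    refine exp_eq_exp_iff_exists_int.mpr ⟨-n, ?_⟩
    push_cast
    field_simp
    ring

theorem integral_norm_sq_waveTrace (hL : L ≠ 0) (hvp : 1 + v ≠ 0) (hvm : 1 - v ≠ 0) :
    ∫ t in (0 : ℝ)..(L / (1 + v) + L / (1 - v)), ‖waveTrace L v S c t‖ ^ 2
      = 8 * π ^ 2 / (L * (1 - v ^ 2)) * ∑ n ∈ S, ‖(n : ℂ) * c n‖ ^ 2 := by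
  have hP : L / (1 + v) + L / (1 - v) ≠ 0 := by
    rw [div_add_div _ _ hvp hvm]
    exact div_ne_zero (by ring_nf; exact mul_ne_zero hL two_ne_zero) (mul_ne_zero hvp hvm)
  have hnorm : ∀ n : ℤ, ‖2 * π * I / L * (n * c n)‖ ^ 2 = (2 * π / L) ^ 2 * ‖(n : ℂ) * c n‖ ^ 2 :=
    fun n => by simp [mul_pow, div_pow, abs_of_pos pi_pos]
  unfold waveTrace
  rw [integral_norm_sq_fourier_sum hP, Finset.sum_congr rfl fun n _ => hnorm n,
    ← Finset.mul_sum, ← mul_assoc, show 1 - v ^ 2 = (1 - v) * (1 + v) by ring]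
  congr 1
  field_simp
  ring

end Wave

theorem stmt15_general (L v : ℝ) (hL : 0 < L) (hv0 : 0 < v) (hv1 : v < 1)
    (S : Finset ℤ) (c : ℤ → ℂ) (φ : ℝ → ℝ → ℂ)
    (hφ : ∀ x t : ℝ, φ x t = ∑ n ∈ S, c n * (Complex.exp ((n : ℂ) * (Real.pi : ℂ) * Complex.I * ((1 : ℂ) - (v : ℂ)) * ((t : ℂ) + (x : ℂ)) / (L : ℂ)) - Complex.exp ((n : ℂ) * (Real.pi : ℂ) * Complex.I * ((1 : ℂ) + (v : ℂ)) * ((t : ℂ) - (x : ℂ)) / (L : ℂ)))) :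
    (∫ t in (0 : ℝ)..(L / (1 + v)), ‖deriv (fun y => φ y t) (v * t)‖ ^ 2)
      + (∫ t in (0 : ℝ)..(L / (1 - v)), ‖deriv (fun y => φ y t) (L + v * t)‖ ^ 2)
      = (8 * Real.pi ^ 2 / (L * (1 - v ^ 2))) * ∑ n ∈ S, ‖(n : ℂ) * c n‖ ^ 2 := by
  have hvp : 1 + v ≠ 0 := by positivity
  have hvm : 1 - v ≠ 0 := (sub_pos.mpr hv1).ne'
  have hφ_wave : ∀ t, (fun y => φ y t) = fun y => wave L v S c y t :=
    fun t => funext fun y => by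
      rw [hφ, wave]
      exact Finset.sum_congr rfl fun n _ => by ring_nf
  have hg : Continuous fun t => ‖waveTrace L v S c t‖ ^ 2 := by
    unfold waveTrace
    fun_prop
  simp only [hφ_wave, deriv_wave_left S c hL.ne' hvp hvm, deriv_wave_right S c hL.ne' hvp hvm]
  rw [intervalIntegral.integral_comp_add_right (fun t => ‖waveTrace L v S c t‖ ^ 2), zero_add,
    add_comm _ (L / (1 + v)), intervalIntegral.integral_add_adjacent_intervals
      (hg.intervalIntegrable _ _) (hg.intervalIntegrable _ _),
    integral_norm_sq_waveTrace S c hL.ne' hvp hvm]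

theorem stmt15 (L v : ℝ) (hL : 0 < L) (hv0 : 0 < v) (hv1 : v < 1)
    (S : Finset ℤ) (hS : ∀ n ∈ S, n ≠ 0) (c : ℤ → ℂ) (φ : ℝ → ℝ → ℂ)
    (hφ : ∀ x t : ℝ, φ x t = ∑ n ∈ S, c n * (Complex.exp ((n : ℂ) * (Real.pi : ℂ) * Complex.I * ((1 : ℂ) - (v : ℂ)) * ((t : ℂ) + (x : ℂ)) / (L : ℂ)) - Complex.exp ((n : ℂ) * (Real.pi : ℂ) * Complex.I * ((1 : ℂ) + (v : ℂ)) * ((t : ℂ) - (x : ℂ)) / (L : ℂ)))) :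
    (∫ t in (0 : ℝ)..(L / (1 + v)), ‖deriv (fun y => φ y t) (v * t)‖ ^ 2)
      + (∫ t in (0 : ℝ)..(L / (1 - v)), ‖deriv (fun y => φ y t) (L + v * t)‖ ^ 2)
      = (8 * Real.pi ^ 2 / (L * (1 - v ^ 2))) * ∑ n ∈ S, ‖(n : ℂ) * c n‖ ^ 2 :=
  stmt15_general L v hL hv0 hv1 S c φ hφ
end
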